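/- In the dihedral Artin group A with coefficient m ≥ 3 and Garside element Δ, the syllabic length of Δ^n satisfies ℓ_S(Δ^n) ≥ (m−2)·|n| for every integer n. In particular, ℓ_S(Δ^n) grows linearly in n. -/

import Mathlib

/-!
The group acts on `ℚ` by order-preserving bijections in which `a` fixes every even integer,
`b` fixes every odd integer and `Δ` is the translation by `m - 2`. A syllable `a ^ k` or `b ^ k`
then fixes an integer in every interval `[n, n + 1]`, so by monotonicity it raises `⌈x⌉` by at
most one. Hence a product of `ℓ` syllables sends `0` to at most `ℓ`, whereas `Δ ^ n` sends it to
`n (m - 2)`.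

To build the action, let `t` be the translation by `1` and let `h` commute with `t ^ 2`, satisfy
`h ^ m = t⁻²` and send `2j` to `2j - 1`. Then `a = t h` and `b = h t` fix the even, resp. odd,
integers and both alternating products of length `m` equal `t ^ (m - 2)`. Such an `h` is the
translation by `-2/m` conjugated by a piecewise-linear bijection commuting with `x ↦ x + 2`
that sends `2 - 2/m` to `1`.
-/

/-- The alternating word `xyxy⋯` of length `m` in the free group on `Bool`,
starting with the generator `x`. -/
def altWord (x : Bool) (m : ℕ) : FreeGroup Bool :=
  ((List.range m).map (fun i => FreeGroup.of (if i % 2 = 0 then x else !x))).prod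

/-- The defining relation `prod(a,b;m) = prod(b,a;m)` of the dihedral Artin group,
with `a = true` and `b = false`. -/
def artinRels (m : ℕ) : Set (FreeGroup Bool) :=
  {altWord true m * (altWord false m)⁻¹}

/-- The dihedral Artin group `⟨a, b | prod(a,b;m) = prod(b,a;m)⟩`. -/
abbrev DihedralArtin (m : ℕ) := PresentedGroup (artinRels m)

/-- The Garside element `Δ` of the dihedral Artin group. -/
def garside (m : ℕ) : DihedralArtin m := PresentedGroup.mk (artinRels m) (altWord true m)

/-- The syllabic length of `g` relative to the generating pair `(a, b)`:
the least number of syllables (nonzero powers of `a` or of `b`) whose product is `g`. -/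
noncomputable def sylLen {A : Type*} [Group A] (a b : A) (g : A) : ℕ :=
  sInf {n | ∃ L : List A, L.length = n ∧
    (∀ x ∈ L, (∃ k : ℤ, x = a ^ k) ∨ (∃ k : ℤ, x = b ^ k)) ∧ L.prod = g}

def altProd {M : Type*} [Monoid M] (x y : M) : ℕ → M
  | 0 => 1
  | n + 1 => x * altProd y x n

lemma altWord_succ (x : Bool) (n : ℕ) :
    altWord x (n + 1) = FreeGroup.of x * altWord (!x) n := by
  simp only [altWord, List.range_succ_eq_map, List.map_cons, List.prod_cons, List.map_map]
  congr 2
  refine List.map_congr_left fun i _ => ?_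
  rcases Nat.mod_two_eq_zero_or_one i with h | h <;> simp [Nat.succ_mod_two_eq_zero_iff, h]

lemma lift_altWord {G : Type*} [Group G] (f : Bool → G) (x : Bool) (n : ℕ) :
    FreeGroup.lift f (altWord x n) = altProd (f x) (f !x) n := by
  induction n generalizing x with
  | zero => simp [altWord, altProd]
  | succ n ih => simp [altWord_succ, altProd, ih]

section AltProd

variable {G : Type*} [Group G] {t h : G}

lemma altProd_mul_eq_pow_mul_pow (hc : Commute h (t ^ 2)) (n : ℕ) :
    altProd (t * h) (h * t) n * t = t * (h ^ n * t ^ n) ∧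
      altProd (h * t) (t * h) n = h ^ n * t ^ n := by
  induction n with
  | zero => simp [altProd]
  | succ n ih =>
    obtain ⟨ih₁, ih₂⟩ := ih
    constructor
    · rw [altProd, ih₂, pow_succ', pow_succ]
      group
    · have hc' : Commute (t * t) (h ^ n) := by simpa [sq] using (hc.pow_left n).symm
      have : t * altProd (t * h) (h * t) n = t * t * h ^ n * t ^ n * t⁻¹ := by
        rw [← mul_inv_cancel_right (altProd _ _ n) t, ih₁]; group
      rw [altProd, mul_assoc, this, hc'.eq, pow_succ', pow_succ]
      group

lemma altProd_eq_zpow {m : ℕ} (hc : Commute h (t ^ 2)) (hm : h ^ m = (t ^ 2)⁻¹) :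
    altProd (t * h) (h * t) m = t ^ ((m : ℤ) - 2) ∧
      altProd (h * t) (t * h) m = t ^ ((m : ℤ) - 2) := by
  obtain ⟨h₁, h₂⟩ := altProd_mul_eq_pow_mul_pow hc m
  rw [hm] at h₁ h₂
  refine ⟨mul_right_cancel (b := t) ?_, ?_⟩
  · rw [h₁]; group
  · rw [h₂]; group

end AltProd

section Syllables

variable {G : Type*} [Group G] {a b : G}

def IsSyllable (a b x : G) : Prop := (∃ k : ℤ, x = a ^ k) ∨ (∃ k : ℤ, x = b ^ k)

lemma IsSyllable.inv {x : G} (hx : IsSyllable a b x) : IsSyllable a b x⁻¹ := by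
  rcases hx with ⟨k, rfl⟩ | ⟨k, rfl⟩
  exacts [.inl ⟨-k, (zpow_neg a k).symm⟩, .inr ⟨-k, (zpow_neg b k).symm⟩]

lemma IsSyllable.map {H : Type*} [Group H] (f : G →* H) {x : G} (hx : IsSyllable a b x) :
    IsSyllable (f a) (f b) (f x) := by
  rcases hx with ⟨k, rfl⟩ | ⟨k, rfl⟩
  exacts [.inl ⟨k, map_zpow f a k⟩, .inr ⟨k, map_zpow f b k⟩]

lemma exists_syllables_inv {g : G} {n : ℕ}
    (h : ∃ L : List G, L.length = n ∧ (∀ x ∈ L, IsSyllable a b x) ∧ L.prod = g) :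
    ∃ L : List G, L.length = n ∧ (∀ x ∈ L, IsSyllable a b x) ∧ L.prod = g⁻¹ := by
  obtain ⟨L, rfl, hL, rfl⟩ := h
  refine ⟨(L.map (·⁻¹)).reverse, by simp, fun x hx => ?_, (List.prod_inv_reverse L).symm⟩
  obtain ⟨y, hy, rfl⟩ := List.mem_map.1 (List.mem_reverse.1 hx)
  exact (hL y hy).inv

lemma sylLen_inv (a b g : G) : sylLen a b g⁻¹ = sylLen a b g := by
  unfold sylLen
  congr 1
  ext n
  refine ⟨fun h => ?_, exists_syllables_inv⟩
  have := exists_syllables_inv h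
  rwa [inv_inv] at this

lemma sylLen_zpow_natAbs (a b g : G) (n : ℤ) :
    sylLen a b (g ^ n) = sylLen a b (g ^ n.natAbs) := by
  obtain ⟨k, rfl | rfl⟩ := Int.eq_nat_or_neg n
  · simp
  · rw [zpow_neg, sylLen_inv]; simp

lemma exists_syllables_of_closure (hab : Subgroup.closure {a, b} = ⊤) (g : G) :
    ∃ L : List G, (∀ x ∈ L, IsSyllable a b x) ∧ L.prod = g := by
  have hg : g ∈ Subgroup.closure {a, b} := hab ▸ Subgroup.mem_top g
  induction hg using Subgroup.closure_induction with
  | mem x hx =>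
    refine ⟨[x], List.forall_mem_singleton.2 ?_, List.prod_singleton⟩
    rcases hx with rfl | rfl
    exacts [.inl ⟨1, (zpow_one x).symm⟩, .inr ⟨1, (zpow_one x).symm⟩]
  | one => exact ⟨[], by simp, List.prod_nil⟩
  | mul x y _ _ hx hy =>
    obtain ⟨L, hL, rfl⟩ := hx
    obtain ⟨M, hM, rfl⟩ := hy
    exact ⟨L ++ M, fun z hz => (List.mem_append.1 hz).elim (hL z) (hM z), List.prod_append⟩
  | inv x _ hx =>
    obtain ⟨L, hL, hprod⟩ := hx
    obtain ⟨M, -, hM, hprodM⟩ := exists_syllables_inv ⟨L, rfl, hL, hprod⟩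
    exact ⟨M, hM, hprodM⟩

lemma le_sylLen_of_forall (hab : Subgroup.closure {a, b} = ⊤) {g : G} {k : ℕ}
    (h : ∀ L : List G, (∀ x ∈ L, IsSyllable a b x) → L.prod = g → k ≤ L.length) :
    k ≤ sylLen a b g := by
  obtain ⟨L, hL, hprod⟩ := exists_syllables_of_closure hab g
  refine le_csInf ⟨L.length, L, rfl, hL, hprod⟩ ?_
  rintro n ⟨M, rfl, hM, hprodM⟩
  exact h M hM hprodM

end Syllables

section Counting

variable {R : Type*} [Ring R] [LinearOrder R] [IsStrictOrderedRing R] [FloorRing R]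

lemma ceil_apply_le_ceil_add_one {f : R → R} (hf : Monotone f)
    (hfix : ∀ n : ℤ, f n = n ∨ f (n + 1) = n + 1) (x : R) : ⌈f x⌉ ≤ ⌈x⌉ + 1 := by
  rcases hfix ⌈x⌉ with h | h
  · have : f x ≤ ⌈x⌉ := h ▸ hf (Int.le_ceil x)
    linarith [Int.ceil_le.2 this]
  · have : f x ≤ ⌈x⌉ + 1 := h ▸ hf ((Int.le_ceil x).trans (le_add_of_nonneg_right zero_le_one))
    exact Int.ceil_le.2 (by exact_mod_cast this)

lemma ceil_list_prod_apply_le (L : List (R ≃o R))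
    (hL : ∀ f ∈ L, ∀ n : ℤ, f n = n ∨ f (n + 1) = n + 1) (x : R) :
    ⌈L.prod x⌉ ≤ ⌈x⌉ + L.length := by
  induction L with
  | nil => simp
  | cons f L ih =>
    have hf := ceil_apply_le_ceil_add_one f.monotone (hL f List.mem_cons_self) (L.prod x)
    have := ih fun g hg => hL g (List.mem_cons_of_mem f hg)
    simp only [List.prod_cons, RelIso.mul_apply, List.length_cons, Nat.cast_succ]
    omega

lemma OrderIso.zpow_apply_eq_self {α : Type*} [LE α] {f : α ≃o α} {x : α} (hx : f x = x)
    (k : ℤ) : (f ^ k) x = x :=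
  MulAction.mem_stabilizer_iff.1
    (zpow_mem (MulAction.mem_stabilizer_iff.2 hx : f ∈ MulAction.stabilizer (α ≃o α) x) k)

lemma ceil_apply_zero_le_sylLen {G : Type*} [Group G] {a b : G}
    (hab : Subgroup.closure {a, b} = ⊤) (ρ : G →* R ≃o R)
    (ha : ∀ j : ℤ, ρ a (2 * j) = 2 * j) (hb : ∀ j : ℤ, ρ b (2 * j + 1) = 2 * j + 1) (g : G) :
    ⌈ρ g 0⌉ ≤ sylLen a b g := by
  rw [← Int.toNat_le]
  refine le_sylLen_of_forall hab fun L hL hprod => Int.toNat_le.2 ?_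
  have hsteps : ∀ f ∈ L.map ρ, ∀ n : ℤ, f n = n ∨ f (n + 1) = n + 1 := by
    intro f hf n
    obtain ⟨x, hx, rfl⟩ := List.mem_map.1 hf
    obtain ⟨j, rfl | rfl⟩ := Int.even_or_odd' n <;>
      rcases (hL x hx).map ρ with ⟨k, hk⟩ | ⟨k, hk⟩ <;> rw [hk] <;> push_cast
    · exact .inl (OrderIso.zpow_apply_eq_self (ha j) k)
    · exact .inr (OrderIso.zpow_apply_eq_self (hb j) k)
    · refine .inr ?_
      rw [add_assoc, one_add_one_eq_two, ← mul_add_one]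
      simpa using OrderIso.zpow_apply_eq_self (ha (j + 1)) k
    · exact .inl (OrderIso.zpow_apply_eq_self (hb j) k)
  have := ceil_list_prod_apply_le _ hsteps 0
  rwa [← map_list_prod, hprod, List.length_map, Int.ceil_zero, zero_add] at this

end Counting

section Kink

variable {K : Type*} [Field K] [LinearOrder K] [IsStrictOrderedRing K] {p q : K}

def kink (p q u : K) : K := if u ≤ p then q / p * u else q + (2 - q) / (2 - p) * (u - p)

lemma kink_strictMono (hp : p ∈ Set.Ioo (0 : K) 2) (hq : q ∈ Set.Ioo (0 : K) 2) :
    StrictMono (kink p q) := by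
  obtain ⟨hp0, hp2⟩ := hp
  obtain ⟨hq0, hq2⟩ := hq
  have h₁ : 0 < q / p := div_pos hq0 hp0
  have h₂ : 0 < (2 - q) / (2 - p) := div_pos (by linarith) (by linarith)
  intro u v huv
  unfold kink
  split_ifs with hu hv hv
  · exact mul_lt_mul_of_pos_left huv h₁
  · have : q / p * u ≤ q := calc
      q / p * u ≤ q / p * p := mul_le_mul_of_nonneg_left hu h₁.le
      _ = q := div_mul_cancel₀ q hp0.ne'
    nlinarith [mul_pos h₂ (sub_pos.2 (not_le.1 hv))]
  · linarith
  · nlinarith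

lemma kink_kink (hp : p ∈ Set.Ioo (0 : K) 2) (hq : q ∈ Set.Ioo (0 : K) 2) (u : K) :
    kink q p (kink p q u) = u := by
  have hle : kink p q u ≤ q ↔ u ≤ p := by
    simpa [kink, hp.1.ne'] using (kink_strictMono hp hq).le_iff_le (a := u) (b := p)
  have hp0 := hp.1.ne'
  have hq0 := hq.1.ne'
  have hp2 : 2 - p ≠ 0 := sub_ne_zero.2 hp.2.ne'
  have hq2 : 2 - q ≠ 0 := sub_ne_zero.2 hq.2.ne'
  by_cases hu : u ≤ p
  · rw [kink, if_pos (hle.2 hu), kink, if_pos hu]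
    field_simp
  · rw [kink, if_neg (hle.not.2 hu), kink, if_neg hu]
    field_simp
    ring

lemma kink_mem_Ico (hp : p ∈ Set.Ioo (0 : K) 2) (hq : q ∈ Set.Ioo (0 : K) 2) {u : K}
    (hu : u ∈ Set.Ico (0 : K) 2) : kink p q u ∈ Set.Ico (0 : K) 2 := by
  have h0 : kink p q 0 = 0 := by simp [kink, hp.1.le]
  have h2 : kink p q 2 = 2 := by
    have : 2 - p ≠ 0 := sub_ne_zero.2 hp.2.ne'
    simp [kink, hp.2.not_ge, this]
  rw [← h0, ← h2]
  exact ⟨(kink_strictMono hp hq).monotone hu.1, kink_strictMono hp hq hu.2⟩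

variable [FloorRing K]

def periodicKink (p q x : K) : K := 2 * ⌊x / 2⌋ + kink p q (x - 2 * ⌊x / 2⌋)

lemma floor_two_mul_add_div_two (k : ℤ) {u : K} (hu : u ∈ Set.Ico (0 : K) 2) :
    ⌊(2 * k + u) / 2⌋ = k := by
  rw [Int.floor_eq_iff]
  constructor <;> linarith [hu.1, hu.2]

lemma periodicKink_two_mul_add (p q : K) (k : ℤ) {u : K} (hu : u ∈ Set.Ico (0 : K) 2) :
    periodicKink p q (2 * k + u) = 2 * k + kink p q u := by
  rw [periodicKink, floor_two_mul_add_div_two k hu, add_sub_cancel_left]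

lemma sub_two_mul_floor_mem_Ico (x : K) : x - 2 * ⌊x / 2⌋ ∈ Set.Ico (0 : K) 2 := by
  constructor <;> linarith [Int.floor_le (x / 2), Int.lt_floor_add_one (x / 2)]

lemma periodicKink_periodicKink (hp : p ∈ Set.Ioo (0 : K) 2) (hq : q ∈ Set.Ioo (0 : K) 2)
    (x : K) : periodicKink q p (periodicKink p q x) = x := by
  have hu := sub_two_mul_floor_mem_Ico x
  rw [periodicKink.eq_1 p q x, periodicKink_two_mul_add q p _ (kink_mem_Ico hp hq hu),
    kink_kink hp hq]
  ring

lemma periodicKink_monotone (hp : p ∈ Set.Ioo (0 : K) 2) (hq : q ∈ Set.Ioo (0 : K) 2) :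
    Monotone (periodicKink p q) := by
  intro x y hxy
  have hx := kink_mem_Ico hp hq (sub_two_mul_floor_mem_Ico x)
  have hy := kink_mem_Ico hp hq (sub_two_mul_floor_mem_Ico y)
  have hk : ⌊x / 2⌋ ≤ ⌊y / 2⌋ := Int.floor_mono (by linarith)
  rcases hk.eq_or_lt with hk | hk
  · rw [periodicKink, periodicKink, hk]
    gcongr
    exact (kink_strictMono hp hq).monotone (by linarith)
  · have : (⌊x / 2⌋ : K) + 1 ≤ ⌊y / 2⌋ := by exact_mod_cast hk
    rw [periodicKink, periodicKink]
    linarith [hx.2, hy.1]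

lemma periodicKink_add_two (p q x : K) : periodicKink p q (x + 2) = periodicKink p q x + 2 := by
  have : ⌊(x + 2) / 2⌋ = ⌊x / 2⌋ + 1 := by
    rw [add_div, div_self two_ne_zero, Int.floor_add_one]
  rw [periodicKink, periodicKink, this]
  push_cast
  ring_nf

lemma periodicKink_two_mul (hp : p ∈ Set.Ioo (0 : K) 2) (k : ℤ) :
    periodicKink p q (2 * k) = 2 * k := by
  simpa [kink, hp.1.le] using periodicKink_two_mul_add p q k (u := 0) ⟨le_rfl, two_pos⟩

lemma periodicKink_two_mul_add_self (hp : p ∈ Set.Ioo (0 : K) 2) (k : ℤ) :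
    periodicKink p q (2 * k + p) = 2 * k + q := by
  rw [periodicKink_two_mul_add p q k ⟨hp.1.le, hp.2⟩]
  simp [kink, hp.1.ne']

def kinkIso (hp : p ∈ Set.Ioo (0 : K) 2) (hq : q ∈ Set.Ioo (0 : K) 2) : K ≃o K :=
  Equiv.toOrderIso ⟨periodicKink p q, periodicKink q p, periodicKink_periodicKink hp hq,
    periodicKink_periodicKink hq hp⟩ (periodicKink_monotone hp hq) (periodicKink_monotone hq hp)

end Kink

section Translations

variable {α : Type*} [AddCommGroup α] [PartialOrder α] [IsOrderedAddMonoid α]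

lemma OrderIso.addRight_mul_addRight (a b : α) :
    OrderIso.addRight a * OrderIso.addRight b = OrderIso.addRight (a + b) := by
  ext x
  simp [RelIso.mul_apply, add_assoc, add_comm b a]

lemma OrderIso.addRight_zero : OrderIso.addRight (0 : α) = 1 := by
  ext x
  simp

lemma OrderIso.inv_addRight (c : α) : (OrderIso.addRight c)⁻¹ = OrderIso.addRight (-c) :=
  inv_eq_of_mul_eq_one_right (by rw [OrderIso.addRight_mul_addRight, add_neg_cancel,
    OrderIso.addRight_zero])

lemma OrderIso.addRight_zpow (c : α) (k : ℤ) :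
    OrderIso.addRight c ^ k = OrderIso.addRight (k • c) := by
  induction k using Int.induction_on with
  | zero => rw [zpow_zero, zero_zsmul, OrderIso.addRight_zero]
  | succ k ih => rw [zpow_add_one, ih, OrderIso.addRight_mul_addRight, add_zsmul, one_zsmul]
  | pred k ih =>
    rw [zpow_sub_one, ih, OrderIso.inv_addRight, OrderIso.addRight_mul_addRight, sub_zsmul,
      one_zsmul]

end Translations

section Construction

variable {K : Type*} [Field K] [LinearOrder K] [IsStrictOrderedRing K] [FloorRing K]

lemma exists_root_addRight_neg_two {m : ℕ} (hm : 2 ≤ m) :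
    ∃ h : K ≃o K, Commute h (OrderIso.addRight 2) ∧ h ^ m = OrderIso.addRight (-2) ∧
      ∀ j : ℤ, h (2 * j) = 2 * j - 1 := by
  have hm0 : (2 : K) ≤ m := by exact_mod_cast hm
  have hm_ne : (m : K) ≠ 0 := by positivity
  have hs : 2 - 2 / (m : K) ∈ Set.Ioo (0 : K) 2 := by
    constructor
    · rw [sub_pos, div_lt_iff₀ (by linarith)]; linarith
    · exact sub_lt_self _ (by positivity)
  set φ : K ≃o K := kinkIso hs ⟨one_pos, one_lt_two⟩
  have hφ : Commute φ (OrderIso.addRight 2) := RelIso.ext (periodicKink_add_two _ _)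
  have hτ : Commute (OrderIso.addRight (-2 / (m : K))) (OrderIso.addRight 2) := by
    simp only [Commute, SemiconjBy, OrderIso.addRight_mul_addRight, add_comm]
  refine ⟨φ * OrderIso.addRight (-2 / (m : K)) * φ⁻¹,
    (hφ.mul_left hτ).mul_left hφ.inv_left, ?_, ?_⟩
  · have : (m : ℤ) • (-2 / (m : K)) = -2 := by
      rw [natCast_zsmul, nsmul_eq_mul]
      field_simp
    rw [conj_pow, ← zpow_natCast, OrderIso.addRight_zpow, this,
      ← OrderIso.inv_addRight, hφ.inv_right.mul_inv_cancel]
  · intro j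
    have h₁ : φ⁻¹ (2 * j) = 2 * j := periodicKink_two_mul ⟨one_pos, one_lt_two⟩ j
    have h₂ : φ (2 * (j - 1 : ℤ) + (2 - 2 / m)) = 2 * (j - 1 : ℤ) + 1 :=
      periodicKink_two_mul_add_self hs (j - 1)
    simp only [RelIso.mul_apply, OrderIso.addRight_apply, h₁]
    push_cast at h₂
    rw [show (2 : K) * j + -2 / m = 2 * (j - 1) + (2 - 2 / m) by ring, h₂]
    ring

end Construction

section Representation

variable {K : Type*} [Field K] [LinearOrder K] [IsStrictOrderedRing K] [FloorRing K] {m : ℕ}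

lemma exists_artin_pair (hm : 2 ≤ m) :
    ∃ A B : K ≃o K, (∀ j : ℤ, A (2 * j) = 2 * j) ∧ (∀ j : ℤ, B (2 * j + 1) = 2 * j + 1) ∧
      altProd A B m = OrderIso.addRight ((m : K) - 2) ∧
      altProd B A m = OrderIso.addRight ((m : K) - 2) := by
  obtain ⟨h, hc, hpow, hval⟩ := exists_root_addRight_neg_two (K := K) hm
  set t : K ≃o K := OrderIso.addRight 1
  have ht2 : t ^ 2 = OrderIso.addRight 2 := by
    rw [← zpow_natCast, OrderIso.addRight_zpow]; norm_num
  have htm : t ^ ((m : ℤ) - 2) = OrderIso.addRight ((m : K) - 2) := by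
    rw [OrderIso.addRight_zpow]; norm_num
  obtain ⟨hAB, hBA⟩ := altProd_eq_zpow (ht2 ▸ hc) (by rw [hpow, ht2, OrderIso.inv_addRight])
  refine ⟨t * h, h * t, fun j => ?_, fun j => ?_, htm ▸ hAB, htm ▸ hBA⟩
  · simp [RelIso.mul_apply, t, hval]
  · have := hval (j + 1)
    push_cast at this
    simp only [RelIso.mul_apply, t, OrderIso.addRight_apply, add_assoc, one_add_one_eq_two]
    rw [← mul_add_one, this]
    ring

lemma PresentedGroup.closure_of_true_of_false (rels : Set (FreeGroup Bool)) :
    Subgroup.closure {PresentedGroup.of (rels := rels) true, PresentedGroup.of false} = ⊤ := by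
  rw [Set.pair_comm, ← Bool.range_eq, PresentedGroup.closure_range_of]

lemma exists_dihedralArtin_hom (hm : 2 ≤ m) :
    ∃ ρ : DihedralArtin m →* K ≃o K,
      (∀ j : ℤ, ρ (PresentedGroup.of true) (2 * j) = 2 * j) ∧
      (∀ j : ℤ, ρ (PresentedGroup.of false) (2 * j + 1) = 2 * j + 1) ∧
      ρ (garside m) = OrderIso.addRight ((m : K) - 2) := by
  obtain ⟨A, B, hA, hB, hAB, hBA⟩ := exists_artin_pair (K := K) hm
  have hrel : ∀ r ∈ artinRels m, FreeGroup.lift (fun x => cond x A B) r = 1 := by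
    rintro _ rfl
    simp [lift_altWord, hAB, hBA]
  exact ⟨PresentedGroup.toGroup hrel, hA, hB, (lift_altWord _ true m).trans hAB⟩

end Representation

/-- in the dihedral Artin group with coefficient `m ≥ 3`,
`ℓ_S(Δ^n) ≥ (m − 2)·|n|` for every integer `n`. -/
theorem stmt11 (m : ℕ) (hm : 3 ≤ m) (n : ℤ) :
    (m - 2) * n.natAbs ≤
      sylLen (PresentedGroup.of true) (PresentedGroup.of false) (garside m ^ n) := by
  obtain ⟨ρ, ha, hb, hΔ⟩ := exists_dihedralArtin_hom (K := ℚ) (m := m) (by omega)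
  have hbound := ceil_apply_zero_le_sylLen (PresentedGroup.closure_of_true_of_false _) ρ ha hb
    (garside m ^ n.natAbs)
  have hval : ρ (garside m ^ n.natAbs) 0 = ((m - 2) * n.natAbs : ℕ) := by
    rw [map_pow, hΔ, ← zpow_natCast, OrderIso.addRight_zpow]
    simp [Nat.cast_sub (by omega : 2 ≤ m), mul_comm]
  rw [hval, Int.ceil_natCast] at hbound
  rw [sylLen_zpow_natAbs]
  exact_mod_cast hbound
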